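/- arXiv:1510.03166 — 2 statements merged into one kernel-verified Lean document; each statement's English description precedes it below -/
import Mathlib

section
/- If B is a homomorphic image of A via a surjective homomorphism h, then the natural clone homomorphism from Clo(A) to Clo(B) is uniformly continuous with respect to the uniformities of pointwise convergence. -/
/-! Basic universal algebra over a signature. -/

structure Sig where
  ops : Type
  ar : ops → ℕ

structure Alg (σ : Sig) where
  carrier : Type
  interp : ∀ o : σ.ops, (Fin (σ.ar o) → carrier) → carrier

/-- Terms over the variables `x₁, …, xₙ` (represented by `Fin n`). -/
inductive Tm (σ : Sig) (n : ℕ) : Type where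
  | var : Fin n → Tm σ n
  | app : (o : σ.ops) → (Fin (σ.ar o) → Tm σ n) → Tm σ n

/-- Evaluation of a term in an algebra (the map `ν^A_n`). -/
def evalTm {σ : Sig} (A : Alg σ) {n : ℕ} : Tm σ n → (Fin n → A.carrier) → A.carrier
  | .var i, a => a i
  | .app o ts, a => A.interp o fun j => evalTm A (ts j) a

/-- The set `Clo_n(A)` of `n`-ary term operations of `A`. -/
def CloSet {σ : Sig} (A : Alg σ) (n : ℕ) : Set ((Fin n → A.carrier) → A.carrier) :=
  Set.range fun t : Tm σ n => evalTm A t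

def IsSubalg {σ : Sig} (A : Alg σ) (s : Set A.carrier) : Prop :=
  ∀ o : σ.ops, ∀ x : Fin (σ.ar o) → A.carrier, (∀ i, x i ∈ s) → A.interp o x ∈ s

/-- The algebra structure on a subalgebra. -/
def subAlg {σ : Sig} (A : Alg σ) (s : Set A.carrier) (hs : IsSubalg A s) : Alg σ where
  carrier := s
  interp o x := ⟨A.interp o fun i => (x i : A.carrier), hs o _ fun i => (x i).2⟩

def IsHom {σ : Sig} (A B : Alg σ) (h : A.carrier → B.carrier) : Prop :=
  ∀ o x, h (A.interp o x) = B.interp o fun i => h (x i)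

/-- Direct power `A^I`. -/
def powAlg {σ : Sig} (A : Alg σ) (I : Type) : Alg σ where
  carrier := I → A.carrier
  interp o x i := A.interp o fun j => x j i

/-- Product of a family of algebras. -/
def prodAlg {σ : Sig} {I : Type} (f : I → Alg σ) : Alg σ where
  carrier := ∀ i, (f i).carrier
  interp o x i := (f i).interp o fun j => x j i

/-- The subuniverse generated by a subset. -/
def genSet {σ : Sig} (A : Alg σ) (g : Set A.carrier) : Set A.carrier :=
  ⋂₀ {s | IsSubalg A s ∧ g ⊆ s}

lemma genSet_isSubalg {σ : Sig} (A : Alg σ) (g : Set A.carrier) :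
    IsSubalg A (genSet A g) := by
  intro o x hx
  rw [genSet, Set.mem_sInter]
  intro s hs
  exact hs.1 o x fun i => Set.mem_sInter.mp (hx i) s hs

/-- The subalgebra of `A` generated by finitely many elements `g 0, …, g (m-1)`. -/
def fgSub {σ : Sig} (A : Alg σ) (m : ℕ) (g : Fin m → A.carrier) : Alg σ :=
  subAlg A (genSet A (Set.range g)) (genSet_isSubalg A _)

/-- `B` is a homomorphic image of a subalgebra of a (possibly infinite) power of `A`. -/
def MemHSP {σ : Sig} (A B : Alg σ) : Prop :=
  ∃ (I : Type) (s : Set (powAlg A I).carrier) (hs : IsSubalg (powAlg A I) s)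
    (h : (subAlg (powAlg A I) s hs).carrier → B.carrier),
      IsHom (subAlg (powAlg A I) s hs) B h ∧ Function.Surjective h

/-- `B` is a homomorphic image of a subalgebra of a finite power of `A`. -/
def MemHSPfin {σ : Sig} (A B : Alg σ) : Prop :=
  ∃ (I : Type) (_ : Finite I) (s : Set (powAlg A I).carrier) (hs : IsSubalg (powAlg A I) s)
    (h : (subAlg (powAlg A I) s hs).carrier → B.carrier),
      IsHom (subAlg (powAlg A I) s hs) B h ∧ Function.Surjective h

/-- The uniformity of pointwise convergence on `X → Y`, `Y` discrete. -/
def ptUnif (X Y : Type) : UniformSpace (X → Y) :=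
  @Pi.uniformSpace X (fun _ => Y) fun _ => ⊥

/-- The uniformity of pointwise convergence on `Clo_n(A)`. -/
def cloUnif {σ : Sig} (A : Alg σ) (n : ℕ) : UniformSpace ↥(CloSet A n) :=
  (ptUnif (Fin n → A.carrier) A.carrier).comap Subtype.val

/-- `φ` is the natural clone homomorphism from `Clo(A)` to `Clo(B)`:
it sends the evaluation of each term in `A` to its evaluation in `B`
(in each arity `n ≥ 1`). -/
def IsNatHom {σ : Sig} (A B : Alg σ)
    (φ : ∀ n : ℕ, ↥(CloSet A (n + 1)) → ↥(CloSet B (n + 1))) : Prop :=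
  ∀ (n : ℕ) (t : Tm σ (n + 1)), (φ n ⟨evalTm A t, ⟨t, rfl⟩⟩ : _).val = evalTm B t

/-- Uniform continuity of a clone map, with respect to the uniformities of
pointwise convergence (equivalently, uniform continuity on the coproduct). -/
def NatUC {σ : Sig} (A B : Alg σ)
    (φ : ∀ n : ℕ, ↥(CloSet A (n + 1)) → ↥(CloSet B (n + 1))) : Prop :=
  ∀ n : ℕ, @UniformContinuous _ _ (cloUnif A (n + 1)) (cloUnif B (n + 1)) (φ n)

/-! Term operations commute with `h`, so `(φ f) (h ∘ a) = h (f a)`: by surjectivity every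
coordinate of `φ f` is a function of a single coordinate of `f`, and such a map is uniformly
continuous for pointwise convergence with discrete codomains. -/

theorem evalTm_comp_of_isHom {σ : Sig} {A B : Alg σ} {h : A.carrier → B.carrier}
    (hhom : IsHom A B h) {n : ℕ} (t : Tm σ n) (a : Fin n → A.carrier) :
    evalTm B t (h ∘ a) = h (evalTm A t a) := by
  induction t with
  | var i => rfl
  | app o ts ih =>
    simp only [evalTm]
    rw [hhom]
    exact congrArg (B.interp o) (funext ih)

theorem IsNatHom.apply_comp {σ : Sig} {A B : Alg σ} {h : A.carrier → B.carrier}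
    (hhom : IsHom A B h) {φ : ∀ n : ℕ, ↥(CloSet A (n + 1)) → ↥(CloSet B (n + 1))}
    (hφ : IsNatHom A B φ) {n : ℕ} (f : ↥(CloSet A (n + 1))) (a : Fin (n + 1) → A.carrier) :
    (φ n f).val (h ∘ a) = h (f.val a) := by
  obtain ⟨f, t, rfl⟩ := f
  rw [hφ n t]
  exact evalTm_comp_of_isHom hhom t a

theorem uniformContinuous_ptUnif_of_forall_factor {X Y X' Y' : Type} {S : Set (X → Y)}
    {F : S → X' → Y'} (hF : ∀ x', ∃ (x : X) (g : Y → Y'), ∀ f : S, F f x' = g (f.val x)) :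
    @UniformContinuous _ _ ((ptUnif X Y).comap Subtype.val) (ptUnif X' Y') F := by
  let _ : UniformSpace Y := ⊥
  let _ : UniformSpace Y' := ⊥
  let _ : UniformSpace S := (ptUnif X Y).comap Subtype.val
  refine uniformContinuous_pi.mpr fun x' => ?_
  obtain ⟨x, g, hg⟩ := hF x'
  have hcoord : UniformContinuous fun f : S => f.val x :=
    (Pi.uniformContinuous_proj _ x).comp uniformContinuous_subtype_val
  simp only [hg]
  exact (DiscreteUniformity.uniformContinuous Y g).comp hcoord

/-- If `B` is a homomorphic image of `A` via a surjective homomorphism, then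
the natural clone homomorphism from `Clo(A)` to `Clo(B)` is uniformly
continuous with respect to the uniformities of pointwise convergence. -/
theorem stmt_7 {σ : Sig} (A B : Alg σ)
    (h : A.carrier → B.carrier) (hhom : IsHom A B h) (hsurj : Function.Surjective h)
    (φ : ∀ n : ℕ, ↥(CloSet A (n + 1)) → ↥(CloSet B (n + 1)))
    (hφ : IsNatHom A B φ) :
    NatUC A B φ := by
  intro n
  refine uniformContinuous_comap' (f := Subtype.val) (g := φ n) (v := ptUnif _ _)
    (u := cloUnif A (n + 1)) (uniformContinuous_ptUnif_of_forall_factor fun b => ?_)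
  obtain ⟨a, rfl⟩ := hsurj.comp_left b
  exact ⟨a, h, fun f => hφ.apply_comp hhom f a⟩
end

section
/- If every finitely generated subalgebra of B is a homomorphic image of a subalgebra of a finite power of A, then B ∈ HSP(A) and the natural clone homomorphism from Clo(A) onto Clo(B) is uniformly continuous. -/
/-! If `C` is an image of a subalgebra of a finite power `A ^ I`, pulling a tuple of `C` back to
`A ^ I` shows that whether two terms agree at that tuple is decided by their values at `|I|`
tuples of `A`. Applied to the finitely generated subalgebras of `B`, this makes `B` satisfy every
identity of `A`, so `t^A ↦ t^B` is well defined, and uniformly continuous for pointwise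
convergence. As terms are finitary, the identities of `A` even hold in `B` in `|B|` variables,
which is what Birkhoff's free-algebra construction needs to place `B` in `HSP(A)`. -/

section

variable {σ : Sig}

inductive TmV (σ : Sig) (V : Type) : Type where
  | var : V → TmV σ V
  | app : (o : σ.ops) → (Fin (σ.ar o) → TmV σ V) → TmV σ V

def evalTmV (A : Alg σ) {V : Type} : TmV σ V → (V → A.carrier) → A.carrier
  | .var v, a => a v
  | .app o ts, a => A.interp o fun j => evalTmV A (ts j) a

namespace TmV

def vars {V : Type} : TmV σ V → Set V
  | .var v => {v}
  | .app _ ts => ⋃ j, vars (ts j)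

theorem vars_finite {V : Type} (t : TmV σ V) : t.vars.Finite := by
  induction t with
  | var v => exact Set.finite_singleton v
  | app o ts ih => exact Set.finite_iUnion ih

def toTm {V : Type} {k : ℕ} (idx : V → Fin k) : TmV σ V → Tm σ k
  | .var v => .var (idx v)
  | .app o ts => .app o fun j => toTm idx (ts j)

end TmV

theorem evalTm_toTm (A : Alg σ) {V : Type} {k : ℕ} (idx : V → Fin k) (t : TmV σ V)
    (g : Fin k → A.carrier) : evalTm A (t.toTm idx) g = evalTmV A t (g ∘ idx) := by
  induction t with
  | var v => rfl
  | app o ts ih => exact congrArg (A.interp o) (funext ih)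

theorem evalTmV_congr (A : Alg σ) {V : Type} (t : TmV σ V) {f g : V → A.carrier}
    (h : t.vars.EqOn f g) : evalTmV A t f = evalTmV A t g := by
  induction t with
  | var v => exact h rfl
  | app o ts ih =>
    exact congrArg (A.interp o) <| funext fun j =>
      ih j fun v hv => h (Set.mem_iUnion.2 ⟨j, hv⟩)

theorem evalTm_hom {C D : Alg σ} {h : C.carrier → D.carrier} (hh : IsHom C D h)
    {n : ℕ} (t : Tm σ n) (g : Fin n → C.carrier) :
    h (evalTm C t g) = evalTm D t (h ∘ g) := by
  induction t with
  | var i => rfl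
  | app o ts ih => exact (hh o _).trans (congrArg (D.interp o) (funext ih))

theorem evalTmV_hom {C D : Alg σ} {h : C.carrier → D.carrier} (hh : IsHom C D h)
    {V : Type} (t : TmV σ V) (g : V → C.carrier) :
    h (evalTmV C t g) = evalTmV D t (h ∘ g) := by
  induction t with
  | var v => rfl
  | app o ts ih => exact (hh o _).trans (congrArg (D.interp o) (funext ih))

theorem evalTm_subAlg_val (A : Alg σ) {s : Set A.carrier} (hs : IsSubalg A s) {n : ℕ}
    (t : Tm σ n) (g : Fin n → (subAlg A s hs).carrier) :
    (evalTm (subAlg A s hs) t g).val = evalTm A t fun j => (g j).val :=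
  evalTm_hom (fun _ _ => rfl) t g

theorem evalTm_powAlg (A : Alg σ) {I : Type} {n : ℕ} (t : Tm σ n)
    (g : Fin n → (powAlg A I).carrier) (i : I) :
    evalTm (powAlg A I) t g i = evalTm A t fun j => g j i :=
  evalTm_hom (C := powAlg A I) (h := fun y => y i) (fun _ _ => rfl) t g

theorem evalTmV_powAlg (A : Alg σ) {I V : Type} (t : TmV σ V)
    (g : V → (powAlg A I).carrier) (i : I) :
    evalTmV (powAlg A I) t g i = evalTmV A t fun v => g v i :=
  evalTmV_hom (C := powAlg A I) (h := fun y => y i) (fun _ _ => rfl) t g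

theorem subset_genSet (A : Alg σ) (g : Set A.carrier) : g ⊆ genSet A g :=
  fun _ ha => Set.mem_sInter.2 fun _ hs => hs.2 ha

theorem genSet_range_subset (A : Alg σ) {ι : Type} (g : ι → A.carrier) :
    genSet A (Set.range g) ⊆ Set.range fun t : TmV σ ι => evalTmV A t g := by
  refine Set.sInter_subset_of_mem ⟨fun o x hx => ?_, ?_⟩
  · choose ts hts using hx
    exact ⟨.app o ts, congrArg (A.interp o) (funext hts)⟩
  · rintro _ ⟨i, rfl⟩
    exact ⟨.var i, rfl⟩

theorem exists_isHom_genSet (C D : Alg σ) {ι : Type} (g : ι → C.carrier) (d : ι → D.carrier)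
    (hgd : ∀ t t' : TmV σ ι, evalTmV C t g = evalTmV C t' g → evalTmV D t d = evalTmV D t' d) :
    ∃ h : (subAlg C _ (genSet_isSubalg C (Set.range g))).carrier → D.carrier,
      IsHom (subAlg C _ (genSet_isSubalg C (Set.range g))) D h ∧
        ∀ i, h ⟨g i, subset_genSet C _ ⟨i, rfl⟩⟩ = d i := by
  choose rep hrep using fun y : genSet C (Set.range g) => genSet_range_subset C g y.2
  refine ⟨fun y => evalTmV D (rep y) d, fun o y => hgd _ (.app o fun j => rep (y j)) ?_,
    fun i => hgd _ (.var i) (hrep _)⟩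
  exact (hrep _).trans (congrArg (C.interp o) (funext fun j => (hrep (y j)).symm))

theorem MemHSPfin.exists_finite_eqOn {A C : Alg σ} (hC : MemHSPfin A C) {m : ℕ}
    (c : Fin m → C.carrier) :
    ∃ T : Set (Fin m → A.carrier), T.Finite ∧
      ∀ t t' : Tm σ m, T.EqOn (evalTm A t) (evalTm A t') → evalTm C t c = evalTm C t' c := by
  obtain ⟨I, _, s, hs, h, hh, hsurj⟩ := hC
  let x j := Function.surjInv hsurj (c j)
  refine ⟨Set.range fun i j => (x j).val i, Set.finite_range _, fun t t' heq => ?_⟩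
  have hx : evalTm (subAlg _ s hs) t x = evalTm (subAlg _ s hs) t' x :=
    Subtype.ext <| funext fun i => by
      simpa only [evalTm_subAlg_val, evalTm_powAlg] using heq ⟨i, rfl⟩
  have hhx : h ∘ x = c := funext fun j => Function.surjInv_eq hsurj (c j)
  simpa only [evalTm_hom hh, hhx] using congrArg h hx

def LocallyMemHSPfin (A B : Alg σ) : Prop :=
  ∀ (m : ℕ) (g : Fin m → B.carrier), MemHSPfin A (fgSub B m g)

namespace LocallyMemHSPfin

variable {A B : Alg σ}

theorem exists_finite_eqOn (hAB : LocallyMemHSPfin A B) {m : ℕ} (c : Fin m → B.carrier) :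
    ∃ T : Set (Fin m → A.carrier), T.Finite ∧
      ∀ t t' : Tm σ m, T.EqOn (evalTm A t) (evalTm A t') → evalTm B t c = evalTm B t' c := by
  let c' : Fin m → (fgSub B m c).carrier := fun j => ⟨c j, subset_genSet B _ ⟨j, rfl⟩⟩
  obtain ⟨T, hT, hc'⟩ := (hAB m c).exists_finite_eqOn c'
  refine ⟨T, hT, fun t t' heq => ?_⟩
  calc evalTm B t c = (evalTm (fgSub B m c) t c').val := (evalTm_subAlg_val B _ t c').symm
    _ = (evalTm (fgSub B m c) t' c').val := congrArg Subtype.val (hc' t t' heq)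
    _ = evalTm B t' c := evalTm_subAlg_val B _ t' c'

theorem evalTm_eq (hAB : LocallyMemHSPfin A B) {n : ℕ} {t t' : Tm σ n}
    (h : evalTm A t = evalTm A t') : evalTm B t = evalTm B t' := funext fun c => by
  obtain ⟨T, -, hT⟩ := hAB.exists_finite_eqOn c
  exact hT t t' fun a _ => congrFun h a

/-- A term only involves finitely many variables, so this reduces to `evalTm_eq`. -/
theorem evalTmV_eq (hAB : LocallyMemHSPfin A B) {t t' : TmV σ B.carrier}
    (h : evalTmV A t = evalTmV A t') : evalTmV B t id = evalTmV B t' id := by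
  obtain ⟨k, e, he⟩ := (t.vars_finite.union t'.vars_finite).fin_embedding
  -- an extra coordinate makes `Fin (k + 1)` nonempty, so that `invFun c` exists
  let c : Fin (k + 1) → B.carrier := Fin.cons (evalTmV B t id) e
  have hc : (t.vars ∪ t'.vars).EqOn (c ∘ Function.invFun c) id := by
    rw [← he]
    rintro _ ⟨i, rfl⟩
    exact Function.invFun_eq ⟨i.succ, Fin.cons_succ _ _ _⟩
  have hA : evalTm A (t.toTm (Function.invFun c)) = evalTm A (t'.toTm (Function.invFun c)) :=
    funext fun g => by rw [evalTm_toTm, evalTm_toTm, h]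
  have hB := congrFun (hAB.evalTm_eq hA) c
  rw [evalTm_toTm, evalTm_toTm] at hB
  calc evalTmV B t id = evalTmV B t (c ∘ Function.invFun c) :=
        evalTmV_congr B t (hc.mono Set.subset_union_left).symm
    _ = evalTmV B t' (c ∘ Function.invFun c) := hB
    _ = evalTmV B t' id := evalTmV_congr B t' (hc.mono Set.subset_union_right)

/-- `B` is the image of the subalgebra of `A ^ (B → A)` generated by the evaluation maps. -/
theorem memHSP (hAB : LocallyMemHSPfin A B) : MemHSP A B := by
  let x : B.carrier → (powAlg A (B.carrier → A.carrier)).carrier := fun b f => f b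
  obtain ⟨h, hh, hx⟩ := exists_isHom_genSet _ B x id fun t t' htt' => hAB.evalTmV_eq <|
    funext fun f => by simpa only [evalTmV_powAlg] using congrFun htt' f
  exact ⟨_, _, _, h, hh, fun b => ⟨_, hx b⟩⟩

end LocallyMemHSPfin

theorem uniformContinuous_of_forall_exists_finite {X Y X' Y' : Type} {S : Set (X → Y)}
    {T : Set (X' → Y')} (Φ : S → T)
    (hΦ : ∀ x', ∃ F : Set X, F.Finite ∧
      ∀ f g : S, F.EqOn f.val g.val → (Φ f).val x' = (Φ g).val x') :
    @UniformContinuous S T ((ptUnif X Y).comap Subtype.val) ((ptUnif X' Y').comap Subtype.val)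
      Φ := by
  let : UniformSpace Y := ⊥
  let : UniformSpace Y' := ⊥
  refine uniformContinuous_comap' (uniformContinuous_pi.2 fun x' => ?_)
  obtain ⟨F, hF, hΦF⟩ := hΦ x'
  have hev : ∀ x, {p : S × S | p.1.val x = p.2.val x} ∈ uniformity S := fun x =>
    ((Pi.uniformContinuous_proj _ x).comp (uniformContinuous_subtype_val (p := (· ∈ S))))
      (Filter.mem_principal_self SetRel.id)
  refine Filter.tendsto_principal.2 ?_
  filter_upwards [(Filter.biInter_mem hF).2 fun x _ => hev x] with p hp
  exact hΦF _ _ fun x hx => Set.mem_iInter₂.1 hp x hx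

/-- The map `Clo(A) → Clo(B)` sending `t^A` to `t^B` for a chosen term `t`; it does not depend
on the choice once `B` satisfies the identities of `A`. -/
noncomputable def cloMap (A B : Alg σ) (n : ℕ) (F : CloSet A n) : CloSet B n :=
  ⟨evalTm B F.2.choose, F.2.choose, rfl⟩

theorem LocallyMemHSPfin.cloMap_evalTm {A B : Alg σ} (hAB : LocallyMemHSPfin A B) {n : ℕ}
    (t : Tm σ n) : (cloMap A B n ⟨evalTm A t, t, rfl⟩).val = evalTm B t :=
  hAB.evalTm_eq (Exists.choose_spec (p := fun s => evalTm A s = evalTm A t) ⟨t, rfl⟩)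

theorem LocallyMemHSPfin.uniformContinuous_cloMap {A B : Alg σ} (hAB : LocallyMemHSPfin A B)
    (n : ℕ) : @UniformContinuous _ _ (cloUnif A n) (cloUnif B n) (cloMap A B n) := by
  refine uniformContinuous_of_forall_exists_finite _ fun c => ?_
  obtain ⟨T, hT, hc⟩ := hAB.exists_finite_eqOn c
  refine ⟨T, hT, fun F G hFG => hc _ _ fun a ha => ?_⟩
  have hF : evalTm A F.2.choose = F := F.2.choose_spec
  have hG : evalTm A G.2.choose = G := G.2.choose_spec
  rw [hF, hG]
  exact hFG ha

end

/-- If every finitely generated subalgebra of `B` is a homomorphic image of a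
subalgebra of a finite power of `A`, then `B ∈ HSP(A)` and the natural clone
homomorphism from `Clo(A)` onto `Clo(B)` is uniformly continuous. -/
theorem stmt_8 {σ : Sig} (A B : Alg σ)
    (hfin : ∀ (m : ℕ) (g : Fin m → B.carrier), MemHSPfin A (fgSub B m g)) :
    MemHSP A B ∧ ∃ φ : ∀ n : ℕ, ↥(CloSet A (n + 1)) → ↥(CloSet B (n + 1)),
      IsNatHom A B φ ∧ NatUC A B φ :=
  ⟨LocallyMemHSPfin.memHSP hfin, fun n => cloMap A B (n + 1),
    fun _ => LocallyMemHSPfin.cloMap_evalTm hfin,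
    fun n => LocallyMemHSPfin.uniformContinuous_cloMap hfin (n + 1)⟩
end
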